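/- Let X* ∈ F. Then X* satisfies the first-order optimality condition ⟨∇f(X*) | X − X*⟩ ≥ 0 for every X ∈ F if and only if ⟨Γ₊(X*) | V₊(X*)⟩ = 0 and ⟨Γ₋(X*) | V₋(X*)⟩ = 0. -/

import Mathlib

set_option autoImplicit false

open Matrix Set Filter

attribute [local instance] Matrix.normedAddCommGroup Matrix.normedSpace

namespace BoxSDP

open scoped Classical

/-- Trace inner product `⟨A|B⟩ = Trace(Aᵀ B)`. -/
noncomputable def mip {m k : Type*} [Fintype m] [Fintype k]
    (A B : Matrix m k ℝ) : ℝ :=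
  (Aᵀ * B).trace

/-- Frobenius norm `‖A‖_F = √⟨A|A⟩`. -/
noncomputable def fnorm {m k : Type*} [Fintype m] [Fintype k]
    (A : Matrix m k ℝ) : ℝ :=
  Real.sqrt (mip A A)

/-- The feasible set `F = {X : O ⪯ X ⪯ I}` (membership forces symmetry). -/
def Feas (n : ℕ) : Set (Matrix (Fin n) (Fin n) ℝ) :=
  {X | X.PosSemidef ∧ (1 - X).PosSemidef}

/-- Square root of a positive semidefinite matrix (junk value `0` otherwise);
agrees with `A^{1/2} = Q K^{1/2} Qᵀ` on positive semidefinite matrices. -/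
noncomputable def psqrt {m : Type*} [Fintype m] [DecidableEq m]
    (A : Matrix m m ℝ) : Matrix m m ℝ :=
  if h : A.PosSemidef then
    (h.1.eigenvectorUnitary : Matrix m m ℝ) * Matrix.diagonal ((↑) ∘ (fun x => √x) ∘ h.1.eigenvalues) *
      (star h.1.eigenvectorUnitary : Matrix m m ℝ)
  else 0

/-- Fourth root `A^{1/4}` of a positive semidefinite matrix. -/
noncomputable def proot4 {m : Type*} [Fintype m] [DecidableEq m]
    (A : Matrix m m ℝ) : Matrix m m ℝ :=
  psqrt (psqrt A)

/-- The 2-norm of a symmetric matrix: its largest absolute eigenvalue. -/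
noncomputable def norm2 {m : Type*} [Fintype m] [DecidableEq m]
    (A : Matrix m m ℝ) : ℝ :=
  if h : A.IsHermitian then sSup (Set.range fun i => |h.eigenvalues i|) else 0

/-- The linear functional `H ↦ ⟨G|H⟩`, as a continuous linear map; a function
`f` has gradient matrix `G` at `X` iff `HasFDerivAt f (gradCLM G) X`. -/
noncomputable def gradCLM {n : ℕ} (G : Matrix (Fin n) (Fin n) ℝ) :
    Matrix (Fin n) (Fin n) ℝ →L[ℝ] ℝ :=
  LinearMap.toContinuousLinearMap
    { toFun := fun H => mip G H
      map_add' := fun x y => by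
        simp [mip, Matrix.mul_add]
      map_smul' := fun c x => by
        simp [mip, Matrix.mul_smul] }

/-- The Hessian bilinear form `⟨A | ∇²f(X) | B⟩` induced by the derivative
`hessOp` of the gradient map. -/
noncomputable def hform {n : ℕ}
    (hessOp : Matrix (Fin n) (Fin n) ℝ →L[ℝ] Matrix (Fin n) (Fin n) ℝ)
    (A B : Matrix (Fin n) (Fin n) ℝ) : ℝ :=
  mip A (hessOp B)

/-- `underline-f`: the minimum of `⟨G | Y − X̂⟩` over `Y ∈ F`. -/
noncomputable def underf {n : ℕ} (G Xh : Matrix (Fin n) (Fin n) ℝ) : ℝ :=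
  sInf ((fun Y => mip G (Y - Xh)) '' Feas n)

/-- First-order optimality condition at `Xs` for gradient matrix `G`. -/
def FirstOrderOpt {n : ℕ} (G Xs : Matrix (Fin n) (Fin n) ℝ) : Prop :=
  ∀ X ∈ Feas n, 0 ≤ mip G (X - Xs)

/-- A fixed eigenvalue decomposition `G = P Γ Pᵀ` of a symmetric matrix `G`,
with eigenvalues in descending order, split into the block `Pp, gp` of
positive eigenvalues and the block `Pm, gm` of nonpositive eigenvalues. -/
structure SpecDecomp (n : ℕ) (G : Matrix (Fin n) (Fin n) ℝ) where
  np : ℕ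
  nm : ℕ
  hdim : np + nm = n
  Pp : Matrix (Fin n) (Fin np) ℝ
  Pm : Matrix (Fin n) (Fin nm) ℝ
  gp : Fin np → ℝ
  gm : Fin nm → ℝ
  hgp_pos : ∀ i, 0 < gp i
  hgm_nonpos : ∀ j, gm j ≤ 0
  hgp_anti : ∀ i j : Fin np, i ≤ j → gp j ≤ gp i
  hgm_anti : ∀ i j : Fin nm, i ≤ j → gm j ≤ gm i
  hPp_orth : Ppᵀ * Pp = 1
  hPm_orth : Pmᵀ * Pm = 1
  hPpPm : Ppᵀ * Pm = 0
  hPPT : Pp * Ppᵀ + Pm * Pmᵀ = 1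
  hG : G = Pp * Matrix.diagonal gp * Ppᵀ + Pm * Matrix.diagonal gm * Pmᵀ

namespace SpecDecomp

variable {n : ℕ} {G : Matrix (Fin n) (Fin n) ℝ}

/-- `V₊(X) = P₊ᵀ X P₊`. -/
def Vp (sd : SpecDecomp n G) (X : Matrix (Fin n) (Fin n) ℝ) :
    Matrix (Fin sd.np) (Fin sd.np) ℝ :=
  sd.Ppᵀ * X * sd.Pp

/-- `V₋(X) = P₋ᵀ (I − X) P₋`. -/
def Vm (sd : SpecDecomp n G) (X : Matrix (Fin n) (Fin n) ℝ) :
    Matrix (Fin sd.nm) (Fin sd.nm) ℝ :=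
  sd.Pmᵀ * (1 - X) * sd.Pm

/-- The search direction `D(X) = P M Pᵀ` with blocks
`M₁₁ = V₊^{1/2} Γ₊ V₊^{1/2}`, `M₁₂ = γ_max P₊ᵀ X P₋`,
`M₂₁ = γ_max P₋ᵀ X P₊`, `M₂₂ = V₋^{1/2} Γ₋ V₋^{1/2}`. -/
noncomputable def Dmat (sd : SpecDecomp n G) (X : Matrix (Fin n) (Fin n) ℝ) :
    Matrix (Fin n) (Fin n) ℝ :=
  sd.Pp * (psqrt (sd.Vp X) * Matrix.diagonal sd.gp * psqrt (sd.Vp X)) * sd.Ppᵀ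
    + norm2 G • (sd.Pp * (sd.Ppᵀ * X * sd.Pm) * sd.Pmᵀ)
    + norm2 G • (sd.Pm * (sd.Pmᵀ * X * sd.Pp) * sd.Ppᵀ)
    + sd.Pm * (psqrt (sd.Vm X) * Matrix.diagonal sd.gm * psqrt (sd.Vm X)) * sd.Pmᵀ

/-- `N(X) = ⟨G | D(X)⟩`. -/
noncomputable def Nval (sd : SpecDecomp n G) (X : Matrix (Fin n) (Fin n) ℝ) : ℝ :=
  mip G (sd.Dmat X)

end SpecDecomp

/-! In the eigenbasis of `G`, `⟨G | Y − X⟩ = φ(Y) − φ(X)` with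
`φ(Y) = ⟨Γ₊ | V₊(Y)⟩ − ⟨Γ₋ | V₋(Y)⟩`. On `F` both terms of `φ` are nonnegative, and both
vanish at the projection `P₋ P₋ᵀ ∈ F`, so `min_F φ = 0`. Hence `X*` is first-order optimal iff
`φ(X*) ≤ 0`, i.e. iff the nonnegative `⟨Γ₊ | V₊(X*)⟩` and the nonpositive `⟨Γ₋ | V₋(X*)⟩`
both vanish. -/

section TraceInner

variable {k l : Type*} [Fintype k] [Fintype l]

lemma mip_sub_right (A B C : Matrix k l ℝ) : mip A (B - C) = mip A B - mip A C := by
  simp only [mip, Matrix.mul_sub, trace_sub]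

lemma mip_zero_right (A : Matrix k l ℝ) : mip A 0 = 0 := by
  simp only [mip, Matrix.mul_zero, trace_zero]

lemma mip_add_left (A B C : Matrix k l ℝ) : mip (A + B) C = mip A C + mip B C := by
  simp only [mip, transpose_add, Matrix.add_mul, trace_add]

lemma mip_mul_mul_transpose_left (P : Matrix l k ℝ) (D : Matrix k k ℝ) (Y : Matrix l l ℝ) :
    mip (P * D * Pᵀ) Y = mip D (Pᵀ * Y * P) := by
  simp only [mip, transpose_mul, transpose_transpose, Matrix.mul_assoc]
  rw [trace_mul_comm]
  simp only [Matrix.mul_assoc]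

lemma mip_diagonal_left [DecidableEq k] (d : k → ℝ) (M : Matrix k k ℝ) :
    mip (diagonal d) M = ∑ i, d i * M i i := by
  simp [mip, trace, diagonal_mul]

lemma mip_diagonal_nonneg [DecidableEq k] {d : k → ℝ} {M : Matrix k k ℝ}
    (hd : ∀ i, 0 ≤ d i) (hM : M.PosSemidef) : 0 ≤ mip (diagonal d) M := by
  rw [mip_diagonal_left]
  exact Finset.sum_nonneg fun i _ => mul_nonneg (hd i) hM.diag_nonneg

lemma mip_diagonal_nonpos [DecidableEq k] {d : k → ℝ} {M : Matrix k k ℝ}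
    (hd : ∀ i, d i ≤ 0) (hM : M.PosSemidef) : mip (diagonal d) M ≤ 0 := by
  rw [mip_diagonal_left]
  exact Finset.sum_nonpos fun i _ => mul_nonpos_of_nonpos_of_nonneg (hd i) hM.diag_nonneg

end TraceInner

lemma _root_.Matrix.posSemidef_self_mul_transpose {k l : Type*} [Fintype k] [Fintype l]
    (B : Matrix k l ℝ) : (B * Bᵀ).PosSemidef := by
  simpa only [conjTranspose_eq_transpose_of_trivial] using posSemidef_self_mul_conjTranspose B

lemma _root_.Matrix.PosSemidef.transpose_mul_mul_same {k l : Type*} [Fintype k] [Fintype l]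
    {M : Matrix k k ℝ} (hM : M.PosSemidef) (B : Matrix k l ℝ) : (Bᵀ * M * B).PosSemidef := by
  simpa only [conjTranspose_eq_transpose_of_trivial] using hM.conjTranspose_mul_mul_same B

namespace SpecDecomp

variable {n : ℕ} {G : Matrix (Fin n) (Fin n) ℝ} (sd : SpecDecomp n G)

lemma mip_eq (Y : Matrix (Fin n) (Fin n) ℝ) :
    mip G Y = mip (diagonal sd.gp) (sd.Ppᵀ * Y * sd.Pp)
      + mip (diagonal sd.gm) (sd.Pmᵀ * Y * sd.Pm) := by
  conv_lhs => rw [sd.hG]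
  rw [mip_add_left, mip_mul_mul_transpose_left, mip_mul_mul_transpose_left]

lemma mip_sub_eq (X Y : Matrix (Fin n) (Fin n) ℝ) :
    mip G (Y - X) =
      (mip (diagonal sd.gp) (sd.Vp Y) - mip (diagonal sd.gm) (sd.Vm Y))
        - (mip (diagonal sd.gp) (sd.Vp X) - mip (diagonal sd.gm) (sd.Vm X)) := by
  have hVp : sd.Ppᵀ * (Y - X) * sd.Pp = sd.Vp Y - sd.Vp X := by
    simp only [Vp, Matrix.mul_sub, Matrix.sub_mul]
  have hVm : sd.Pmᵀ * (Y - X) * sd.Pm = sd.Vm X - sd.Vm Y := by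
    simp only [Vm, Matrix.mul_sub, Matrix.sub_mul]
    abel
  rw [mip_eq, hVp, hVm, mip_sub_right, mip_sub_right]
  ring

lemma Vp_posSemidef {X : Matrix (Fin n) (Fin n) ℝ} (hX : X ∈ Feas n) : (sd.Vp X).PosSemidef :=
  PosSemidef.transpose_mul_mul_same hX.1 sd.Pp

lemma Vm_posSemidef {X : Matrix (Fin n) (Fin n) ℝ} (hX : X ∈ Feas n) : (sd.Vm X).PosSemidef :=
  PosSemidef.transpose_mul_mul_same hX.2 sd.Pm

lemma mip_Vp_nonneg {X : Matrix (Fin n) (Fin n) ℝ} (hX : X ∈ Feas n) :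
    0 ≤ mip (diagonal sd.gp) (sd.Vp X) :=
  mip_diagonal_nonneg (fun i => (sd.hgp_pos i).le) (sd.Vp_posSemidef hX)

lemma mip_Vm_nonpos {X : Matrix (Fin n) (Fin n) ℝ} (hX : X ∈ Feas n) :
    mip (diagonal sd.gm) (sd.Vm X) ≤ 0 :=
  mip_diagonal_nonpos sd.hgm_nonpos (sd.Vm_posSemidef hX)

lemma Pm_mul_transpose_mem_Feas : sd.Pm * sd.Pmᵀ ∈ Feas n := by
  have hcompl : 1 - sd.Pm * sd.Pmᵀ = sd.Pp * sd.Ppᵀ := by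
    rw [← sd.hPPT, add_sub_cancel_right]
  exact ⟨posSemidef_self_mul_transpose sd.Pm, hcompl ▸ posSemidef_self_mul_transpose sd.Pp⟩

lemma Vp_Pm_mul_transpose : sd.Vp (sd.Pm * sd.Pmᵀ) = 0 := by
  rw [Vp, ← Matrix.mul_assoc, sd.hPpPm, Matrix.zero_mul, Matrix.zero_mul]

lemma Vm_Pm_mul_transpose : sd.Vm (sd.Pm * sd.Pmᵀ) = 0 := by
  rw [Vm, Matrix.mul_sub, Matrix.mul_one, ← Matrix.mul_assoc, sd.hPm_orth, Matrix.one_mul,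
    sub_self, Matrix.zero_mul]

lemma firstOrderOpt_iff (X : Matrix (Fin n) (Fin n) ℝ) :
    FirstOrderOpt G X ↔ mip (diagonal sd.gp) (sd.Vp X) ≤ mip (diagonal sd.gm) (sd.Vm X) := by
  refine ⟨fun hopt => ?_, fun hle Y hY => ?_⟩
  · have h := hopt _ sd.Pm_mul_transpose_mem_Feas
    rw [sd.mip_sub_eq, Vp_Pm_mul_transpose, Vm_Pm_mul_transpose] at h
    simpa only [mip_zero_right, sub_zero, zero_sub, neg_sub, sub_nonneg] using h
  · rw [sd.mip_sub_eq]
    linarith [sd.mip_Vp_nonneg hY, sd.mip_Vm_nonpos hY]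

end SpecDecomp

theorem first_order_iff_inner_gamma_V_zero_general {n : ℕ}
    (grad : Matrix (Fin n) (Fin n) ℝ → Matrix (Fin n) (Fin n) ℝ)
    (Xs : Matrix (Fin n) (Fin n) ℝ) (hXs : Xs ∈ Feas n)
    (sd : SpecDecomp n (grad Xs)) :
    FirstOrderOpt (grad Xs) Xs ↔
      (mip (Matrix.diagonal sd.gp) (sd.Vp Xs) = 0 ∧
        mip (Matrix.diagonal sd.gm) (sd.Vm Xs) = 0) := by
  have hp := sd.mip_Vp_nonneg hXs
  have hm := sd.mip_Vm_nonpos hXs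
  rw [sd.firstOrderOpt_iff]
  constructor
  · intro h
    exact ⟨by linarith, by linarith⟩
  · rintro ⟨hp0, hm0⟩
    rw [hp0, hm0]

theorem first_order_iff_inner_gamma_V_zero {n : ℕ}
    (f : Matrix (Fin n) (Fin n) ℝ → ℝ)
    (grad : Matrix (Fin n) (Fin n) ℝ → Matrix (Fin n) (Fin n) ℝ)
    (hgradsym : ∀ X ∈ Feas n, (grad X).IsSymm)
    (hgrad : ∀ X ∈ Feas n, HasFDerivAt f (gradCLM (grad X)) X)
    (Xs : Matrix (Fin n) (Fin n) ℝ) (hXs : Xs ∈ Feas n)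
    (sd : SpecDecomp n (grad Xs)) :
    FirstOrderOpt (grad Xs) Xs ↔
      (mip (Matrix.diagonal sd.gp) (sd.Vp Xs) = 0 ∧
        mip (Matrix.diagonal sd.gm) (sd.Vm Xs) = 0) :=
  first_order_iff_inner_gamma_V_zero_general grad Xs hXs sd

end BoxSDP
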